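/- arXiv:math/0612379 — 2 statements merged into one kernel-verified Lean document; each statement's English description precedes it below -/
import Mathlib

section
/- Every translation-invariant metric d on a real vector space whose open balls centered at 0 are star-shaped with respect to 0 satisfies d(ρv, 0) ≤ 2ρ d(v,0) for all ρ ≥ 1 and all vectors v (scalar-boundedness by 2). -/
/-- A translation-invariant metric on a real vector space whose open balls centered
at `0` are star-shaped with respect to `0` is scalar-bounded by 2. -/
theorem scalar_bounded_two_of_starshaped_balls
    {V : Type*} [AddCommGroup V] [Module ℝ V]
    (d : V → V → ℝ)
    (hsymm : ∀ v w, d v w = d w v)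
    (htri : ∀ u v w, d u w ≤ d u v + d v w)
    (hself : ∀ v, d v v = 0)
    (hpos : ∀ v w, v ≠ w → 0 < d v w)
    (htrans : ∀ u v w, d (u + w) (v + w) = d u v)
    (hstar : ∀ r : ℝ, 0 < r → ∀ v : V, d v 0 < r →
      ∀ t : ℝ, t ∈ Set.Icc (0 : ℝ) 1 → d (t • v) 0 < r) :
    ∀ (ρ : ℝ), 1 ≤ ρ → ∀ v : V, d (ρ • v) 0 ≤ 2 * ρ * d v 0 := by
  intro ρ hρ v
  have hd0 : 0 ≤ d v 0 := by
    rcases eq_or_ne v 0 with h | h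
    · simp [h, hself]
    · exact (hpos v 0 h).le
  -- d (n • v) 0 ≤ n * d v 0 by induction
  have hnat : ∀ n : ℕ, d ((n : ℝ) • v) 0 ≤ n * d v 0 := by
    intro n
    induction n with
    | zero => simp [hself]
    | succ k ih =>
      have h1 : d (((k : ℝ) + 1) • v) 0 ≤ d (((k : ℝ) + 1) • v) v + d v 0 :=
        htri _ _ _
      have h2 : d (((k : ℝ) + 1) • v) v = d ((k : ℝ) • v) 0 := by
        have := htrans ((k : ℝ) • v) 0 v
        simpa [add_smul] using this
      push_cast
      calc d (((k : ℝ) + 1) • v) 0 ≤ d ((k : ℝ) • v) 0 + d v 0 := by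
            rw [← h2]; exact h1
        _ ≤ (k : ℝ) * d v 0 + d v 0 := by linarith
        _ = ((k : ℝ) + 1) * d v 0 := by ring
  set n : ℕ := ⌈ρ⌉₊ with hn
  have hρ0 : (0 : ℝ) < ρ := lt_of_lt_of_le one_pos hρ
  have hnpos : (0 : ℝ) < n := by
    exact_mod_cast Nat.ceil_pos.mpr hρ0
  have hρn : ρ ≤ (n : ℝ) := Nat.le_ceil ρ
  have hn2ρ : (n : ℝ) ≤ 2 * ρ := by
    have := Nat.ceil_lt_add_one hρ0.le
    linarith
  -- main bound: d (ρ • v) 0 ≤ n * d v 0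
  have key : d (ρ • v) 0 ≤ (n : ℝ) * d v 0 := by
    apply le_of_forall_pos_lt_add
    intro ε hε
    have hr : (0 : ℝ) < (n : ℝ) * d v 0 + ε := by positivity
    have hdn : d ((n : ℝ) • v) 0 < (n : ℝ) * d v 0 + ε := by
      have := hnat n; linarith
    have ht : ρ / n ∈ Set.Icc (0 : ℝ) 1 := by
      constructor
      · positivity
      · rw [div_le_one hnpos]; exact hρn
    have := hstar _ hr ((n : ℝ) • v) hdn (ρ / n) ht
    have heq : (ρ / n) • ((n : ℝ) • v) = ρ • v := by
      rw [smul_smul, div_mul_cancel₀ _ hnpos.ne']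
    rwa [heq] at this
  calc d (ρ • v) 0 ≤ (n : ℝ) * d v 0 := key
    _ ≤ 2 * ρ * d v 0 := by nlinarith
end

section
/- For every translation-invariant metric d on ℝ^ℕ generating the product topology under which d is unbounded (i.e., sup d = ∞), the shift operator σ, (σa)ₙ = a_{n+1}, is unbounded: sup_{a≠0} d(σa,0)/d(a,0) = ∞. -/
/-- For every translation-invariant metric `d` on ℝ^ℕ generating the product
topology and unbounded (`sup d = ∞`), the shift operator `σ`, `(σa)ₙ = a_{n+1}`,
is unbounded: `sup_{a ≠ 0} d(σa,0)/d(a,0) = ∞`. -/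
theorem shift_unbounded_for_unbounded_metric
    (d : (ℕ → ℝ) → (ℕ → ℝ) → ℝ)
    (hsymm : ∀ a b, d a b = d b a)
    (htri : ∀ a b c, d a c ≤ d a b + d b c)
    (hzero : ∀ a b, d a b = 0 ↔ a = b)
    (hnonneg : ∀ a b, 0 ≤ d a b)
    (htrans : ∀ a b c, d (a + c) (b + c) = d a b)
    -- d generates the product topology on ℝ^ℕ
    (htop : TopologicalSpace.generateFrom
        {s : Set (ℕ → ℝ) | ∃ (x : ℕ → ℝ) (ε : ℝ), 0 < ε ∧ s = {y | d y x < ε}} =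
      (Pi.topologicalSpace : TopologicalSpace (ℕ → ℝ)))
    -- d is unbounded
    (hunbdd : ∀ M : ℝ, ∃ a : ℕ → ℝ, M < d a 0)
    (σ : (ℕ → ℝ) → (ℕ → ℝ)) (hσ : ∀ a n, σ a n = a (n + 1)) :
    ∀ C : ℝ, ∃ a : ℕ → ℝ, a ≠ 0 ∧ C * d a 0 < d (σ a) 0 := by
  intro C
  set C' : ℝ := max C 1 with hC'
  have hC'1 : (1:ℝ) ≤ C' := le_max_right _ _
  have hC'0 : (0:ℝ) ≤ C' := le_trans zero_le_one hC'1
  -- suffices to find it for C'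
  suffices h : ∃ a : ℕ → ℝ, a ≠ 0 ∧ C' * d a 0 < d (σ a) 0 by
    obtain ⟨a, ha, hlt⟩ := h
    exact ⟨a, ha, lt_of_le_of_lt
      (mul_le_mul_of_nonneg_right (le_max_left C 1) (hnonneg a 0)) hlt⟩
  by_contra hcon
  push_neg at hcon
  -- σ 0 = 0
  have hσ0 : σ 0 = 0 := by
    funext n; rw [hσ]; rfl
  -- bound for all a
  have hbd : ∀ a : ℕ → ℝ, d (σ a) 0 ≤ C' * d a 0 := by
    intro a
    by_cases ha : a = 0
    · subst ha
      rw [hσ0, (hzero 0 0).mpr rfl, mul_zero]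
    · exact hcon a ha
  -- iterated bound
  have hiter : ∀ (k : ℕ) (a : ℕ → ℝ), d (σ^[k] a) 0 ≤ C' ^ k * d a 0 := by
    intro k
    induction k with
    | zero => intro a; simp
    | succ k ih =>
      intro a
      rw [Function.iterate_succ_apply']
      calc d (σ (σ^[k] a)) 0 ≤ C' * d (σ^[k] a) 0 := hbd _
        _ ≤ C' * (C' ^ k * d a 0) := mul_le_mul_of_nonneg_left (ih a) hC'0
        _ = C' ^ (k + 1) * d a 0 := by ring
  -- the unit ball is open in the product topology
  have hball : @IsOpen _ (TopologicalSpace.generateFrom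
      {s : Set (ℕ → ℝ) | ∃ (x : ℕ → ℝ) (ε : ℝ), 0 < ε ∧ s = {y | d y x < ε}})
      {y : ℕ → ℝ | d y 0 < 1} :=
    TopologicalSpace.GenerateOpen.basic _ ⟨0, 1, one_pos, rfl⟩
  rw [htop] at hball
  have h0mem : (0 : ℕ → ℝ) ∈ {y : ℕ → ℝ | d y 0 < 1} := by
    simp only [Set.mem_setOf_eq, (hzero 0 0).mpr rfl]; exact one_pos
  obtain ⟨I, u, hu, hsub⟩ := isOpen_pi_iff.mp hball 0 h0mem
  -- K strictly above all indices in I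
  obtain ⟨K, hK⟩ : ∃ K : ℕ, ∀ i ∈ I, i < K := by
    refine ⟨(I.sup id) + 1, fun i hi => ?_⟩
    exact Nat.lt_succ_of_le (Finset.le_sup (f := id) hi)
  -- choose b with d b 0 > C'^K
  obtain ⟨b, hb⟩ := hunbdd (C' ^ K)
  -- construct a
  set a : ℕ → ℝ := fun n => if n < K then 0 else b (n - K) with ha
  have haI : a ∈ (I : Set ℕ).pi u := by
    intro i hi
    have : a i = 0 := by simp [ha, hK i hi]
    rw [this]
    exact (hu i hi).2
  have hasmall : d a 0 < 1 := hsub haI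
  have hshift : σ^[K] a = b := by
    funext n
    have hit : ∀ (k : ℕ) (c : ℕ → ℝ) (n : ℕ), (σ^[k] c) n = c (n + k) := by
      intro k
      induction k with
      | zero => intro c n; simp
      | succ k ih =>
        intro c n
        rw [Function.iterate_succ_apply, ih, hσ, Nat.add_assoc]
    rw [hit]
    simp [ha, Nat.add_sub_cancel]
  have hCpos : (0:ℝ) < C' ^ K := pow_pos (lt_of_lt_of_le one_pos hC'1) K
  have : d b 0 ≤ C' ^ K * d a 0 := by rw [← hshift]; exact hiter K a
  have : d b 0 < C' ^ K := lt_of_le_of_lt this (by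
    calc C' ^ K * d a 0 < C' ^ K * 1 := by
          exact mul_lt_mul_of_pos_left hasmall hCpos
      _ = C' ^ K := mul_one _)
  linarith
end
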